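/- In every legitimate configuration γ of Algorithm RSP, the subgraph T_γ = (V_r, {{p, par_p} : p ∈ V_r \ {r}}) is a shortest-path spanning tree of V_r rooted at r: it is a spanning tree of the component V_r and for every u ∈ V_r the unique tree path from u to r has total weight d(u,r). -/
import Mathlib


open Classical

inductive RStatus : Type
  | I | C | EB | EF
deriving DecidableEq

inductive RRule : Type
  | RC | REB | REF | RI | RR
deriving DecidableEq

/-- A network: a finite simple graph with a distinguished root and
strictly positive symmetric edge weights. -/
structure Network (V : Type) [Fintype V] [DecidableEq V] where
  G : SimpleGraph V
  r : V
  w : V → V → ℝ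
  w_symm : ∀ u v : V, w u v = w v u
  w_pos : ∀ u v : V, G.Adj u v → 0 < w u v

/-- A configuration: each process has a status, a parent pointer and a distance value. -/
structure Config (V : Type) where
  st : V → RStatus
  par : V → V
  d : V → ℝ

variable {V : Type} [Fintype V] [DecidableEq V]

/-- The root's variables are constants: status C and distance 0. -/
def RootConst (N : Network V) (γ : Config V) : Prop :=
  γ.st N.r = RStatus.C ∧ γ.d N.r = 0

/-- v ∈ children(u). -/
def childOf (N : Network V) (γ : Config V) (u v : V) : Prop :=
  N.G.Adj u v ∧ γ.st u ≠ RStatus.I ∧ γ.st v ≠ RStatus.I ∧ γ.par v = u ∧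
    γ.d v ≥ γ.d u + N.w v u ∧ (γ.st v = γ.st u ∨ γ.st u = RStatus.EB)

/-- u is an abnormal root. -/
def abRoot (N : Network V) (γ : Config V) (u : V) : Prop :=
  u ≠ N.r ∧ γ.st u ≠ RStatus.I ∧
    (¬ N.G.Adj u (γ.par u) ∨ γ.st (γ.par u) = RStatus.I ∨
     γ.d u < γ.d (γ.par u) + N.w u (γ.par u) ∨
     (γ.st u ≠ γ.st (γ.par u) ∧ γ.st (γ.par u) ≠ RStatus.EB))

def PReset (N : Network V) (γ : Config V) (u : V) : Prop :=
  γ.st u = RStatus.EF ∧ abRoot N γ u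

def PCorrection (N : Network V) (γ : Config V) (u : V) : Prop :=
  ∃ v : V, N.G.Adj u v ∧ γ.st v = RStatus.C ∧ γ.d v + N.w u v < γ.d u

def guardRC (N : Network V) (γ : Config V) (u : V) : Prop :=
  u ≠ N.r ∧ γ.st u = RStatus.C ∧ PCorrection N γ u

def guardREB (N : Network V) (γ : Config V) (u : V) : Prop :=
  u ≠ N.r ∧ γ.st u = RStatus.C ∧ ¬ PCorrection N γ u ∧
    (abRoot N γ u ∨ γ.st (γ.par u) = RStatus.EB)

def guardREF (N : Network V) (γ : Config V) (u : V) : Prop :=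
  u ≠ N.r ∧ γ.st u = RStatus.EB ∧ ∀ v : V, childOf N γ u v → γ.st v = RStatus.EF

def guardRI (N : Network V) (γ : Config V) (u : V) : Prop :=
  u ≠ N.r ∧ PReset N γ u ∧ ∀ v : V, N.G.Adj u v → γ.st v ≠ RStatus.C

def guardRR (N : Network V) (γ : Config V) (u : V) : Prop :=
  u ≠ N.r ∧ (PReset N γ u ∨ γ.st u = RStatus.I) ∧
    ∃ v : V, N.G.Adj u v ∧ γ.st v = RStatus.C

/-- The effect of the macro computePath at u in the step γ → γ'. -/
def ComputePath (N : Network V) (γ γ' : Config V) (u : V) : Prop :=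
  N.G.Adj u (γ'.par u) ∧ γ.st (γ'.par u) = RStatus.C ∧
  (∀ v : V, N.G.Adj u v → γ.st v = RStatus.C →
      γ.d (γ'.par u) + N.w u (γ'.par u) ≤ γ.d v + N.w u v) ∧
  γ'.d u = γ.d (γ'.par u) + N.w u (γ'.par u) ∧ γ'.st u = RStatus.C

/-- u executes the given rule during the step γ → γ'. -/
def ExecRule (N : Network V) (γ γ' : Config V) (u : V) : RRule → Prop
  | RRule.RC => guardRC N γ u ∧ ComputePath N γ γ' u
  | RRule.REB => guardREB N γ u ∧ γ'.st u = RStatus.EB ∧ γ'.par u = γ.par u ∧ γ'.d u = γ.d u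
  | RRule.REF => guardREF N γ u ∧ γ'.st u = RStatus.EF ∧ γ'.par u = γ.par u ∧ γ'.d u = γ.d u
  | RRule.RI => guardRI N γ u ∧ γ'.st u = RStatus.I ∧ γ'.par u = γ.par u ∧ γ'.d u = γ.d u
  | RRule.RR => guardRR N γ u ∧ ComputePath N γ γ' u

def EnabledAt (N : Network V) (γ : Config V) (u : V) : Prop :=
  guardRC N γ u ∨ guardREB N γ u ∨ guardREF N γ u ∨ guardRI N γ u ∨ guardRR N γ u

/-- A step of the distributed (unfair) daemon: a nonempty set of enabled processes
each atomically executes one of its enabled rules; other processes are unchanged. -/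
def Step (N : Network V) (γ γ' : Config V) : Prop :=
  ∃ S : Set V, S.Nonempty ∧ (∀ u ∈ S, ∃ ρ : RRule, ExecRule N γ γ' u ρ) ∧
    ∀ u : V, u ∉ S → γ'.st u = γ.st u ∧ γ'.par u = γ.par u ∧ γ'.d u = γ.d u

def Terminal (N : Network V) (γ : Config V) : Prop :=
  ∀ u : V, ¬ EnabledAt N γ u

/-- Weight of a walk. -/
noncomputable def walkWeight (N : Network V) {u v : V} (p : N.G.Walk u v) : ℝ :=
  (p.darts.map (fun e => N.w e.toProd.1 e.toProd.2)).sum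

/-- x is the weighted distance from u to v in the graph. -/
def IsWDistBetween (N : Network V) (u v : V) (x : ℝ) : Prop :=
  (∃ p : N.G.Walk u v, walkWeight N p = x) ∧ ∀ p : N.G.Walk u v, x ≤ walkWeight N p

/-- x is the weighted distance d(u,r). -/
def IsWDist (N : Network V) (u : V) (x : ℝ) : Prop :=
  IsWDistBetween N u N.r x

/-- k is the hop-distance between u and v: the minimum number of edges
of a minimum-weight path from u to v. -/
def IsHopDist (N : Network V) (u v : V) (k : ℕ) : Prop :=
  (∃ p : N.G.Walk u v, p.length = k ∧ ∀ q : N.G.Walk u v, walkWeight N p ≤ walkWeight N q) ∧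
  (∀ p : N.G.Walk u v, (∀ q : N.G.Walk u v, walkWeight N p ≤ walkWeight N q) → k ≤ p.length)

/-- Legitimate state of a process. -/
def LegitState (N : Network V) (γ : Config V) (u : V) : Prop :=
  u = N.r ∨
  (N.G.Reachable u N.r ∧ γ.st u = RStatus.C ∧ IsWDist N u (γ.d u) ∧
     N.G.Adj u (γ.par u) ∧ γ.d u = γ.d (γ.par u) + N.w u (γ.par u)) ∨
  (¬ N.G.Reachable u N.r ∧ γ.st u = RStatus.I)

def Legitimate (N : Network V) (γ : Config V) : Prop :=
  ∀ u : V, LegitState N γ u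

/-- An execution: an infinite sequence of configurations (stuttering once terminal),
all respecting the root constants, consecutive ones related by steps. -/
def IsExec (N : Network V) (e : ℕ → Config V) : Prop :=
  (∀ i : ℕ, RootConst N (e i)) ∧
  ∀ i : ℕ, Step N (e i) (e (i+1)) ∨ (Terminal N (e i) ∧ e (i+1) = e i)

/-- u executes some rule at step j of execution e. -/
def ExecAt (N : Network V) (e : ℕ → Config V) (j : ℕ) (u : V) : Prop :=
  ∃ ρ : RRule, ExecRule N (e j) (e (j+1)) u ρ

/-- u executes computePath (rule R_C or R_R) at step j. -/
def CPExec (N : Network V) (e : ℕ → Config V) (j : ℕ) (u : V) : Prop :=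
  ExecRule N (e j) (e (j+1)) u RRule.RC ∨ ExecRule N (e j) (e (j+1)) u RRule.RR

def AliveAbRoot (N : Network V) (γ : Config V) (u : V) : Prop :=
  abRoot N γ u ∧ γ.st u ≠ RStatus.EF

/-- Step j is a u-segment break: some non-root process of V_u ceases to be
an alive abnormal root during step j. -/
def SegBreak (N : Network V) (e : ℕ → Config V) (u : V) (j : ℕ) : Prop :=
  ∃ v : V, v ≠ N.r ∧ N.G.Reachable v u ∧
    AliveAbRoot N (e j) v ∧ ¬ AliveAbRoot N (e (j+1)) v

/-- n_maxCC: the maximum number of non-root processes in a connected component. -/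
noncomputable def nmaxCC (N : Network V) : ℕ :=
  sSup {k : ℕ | ∃ v : V, k = {x : V | x ≠ N.r ∧ N.G.Reachable x v}.ncard}

/-- The interval of steps [s, t) is a u-segment of the execution e
(t = ⊤ encodes a final, unbroken segment). -/
def IsSegment (N : Network V) (e : ℕ → Config V) (u : V) (s : ℕ) (t : ℕ∞) : Prop :=
  (s : ℕ∞) < t ∧ (s = 0 ∨ SegBreak N e u (s-1)) ∧
  (∀ j : ℕ, s ≤ j → ((j : ℕ∞) + 1 < t) → ¬ SegBreak N e u j) ∧
  (∀ m : ℕ, t = (m : ℕ∞) → SegBreak N e u (m-1))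

/-- A causal chain of k+1 actions a_1,…,a_{k+1} in the window [s,t):
a_{i} occurs at time τ i, is a computePath execution by process p (i+1)
setting its parent to p i; a_1 occurs no later than any action of p 0,
and each a_{i+1} occurs after a_i but no later than the next action of a_i's executor. -/
structure IsCausalChain (N : Network V) (e : ℕ → Config V) (s : ℕ) (t : ℕ∞)
    (k : ℕ) (τ : Fin (k+1) → ℕ) (p : Fin (k+2) → V) : Prop where
  mono : StrictMono τ
  lb : ∀ i : Fin (k+1), s ≤ τ i
  ub : ∀ i : Fin (k+1), (τ i : ℕ∞) < t
  cp : ∀ i : Fin (k+1), CPExec N e (τ i) (p i.succ) ∧ (e (τ i + 1)).par (p i.succ) = p i.castSucc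
  root_first : ∀ j : ℕ, s ≤ j → j < τ 0 → ¬ ExecAt N e j (p 0)
  between : ∀ i : Fin k, ∀ j : ℕ, τ i.castSucc < j → j < τ i.succ →
      ¬ ExecAt N e j (p i.castSucc.succ)

/-- A maximal causal chain: a causal chain that cannot be extended by a further action. -/
def IsMaxCausalChain (N : Network V) (e : ℕ → Config V) (s : ℕ) (t : ℕ∞)
    (k : ℕ) (τ : Fin (k+1) → ℕ) (p : Fin (k+2) → V) : Prop :=
  IsCausalChain N e s t k τ p ∧
  ¬ ∃ (j : ℕ) (v : V), τ (Fin.last k) < j ∧ (j : ℕ∞) < t ∧ CPExec N e j v ∧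
      (e (j+1)).par v = p (Fin.last (k+1)) ∧
      ∀ j' : ℕ, τ (Fin.last k) < j' → j' < j → ¬ ExecAt N e j' (p (Fin.last (k+1)))

/-- S_{seg,v}: the set of distance values produced by actions of maximal
causal chains rooted at v of the segment [s,t). -/
def SSeg (N : Network V) (e : ℕ → Config V) (s : ℕ) (t : ℕ∞) (v : V) : Set ℝ :=
  {x : ℝ | ∃ (k : ℕ) (τ : Fin (k+1) → ℕ) (p : Fin (k+2) → V),
      IsMaxCausalChain N e s t k τ p ∧ p 0 = v ∧
      ∃ i : Fin (k+1), x = (e (τ i + 1)).d (p i.succ)}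

def Neutralized (N : Network V) (e : ℕ → Config V) (j : ℕ) (u : V) : Prop :=
  EnabledAt N (e j) u ∧ ¬ EnabledAt N (e (j+1)) u

/-- Every process enabled at time s executes or is neutralized before time t. -/
def CompletesRound (N : Network V) (e : ℕ → Config V) (s t : ℕ) : Prop :=
  s ≤ t ∧ ∀ u : V, EnabledAt N (e s) u →
    ∃ j : ℕ, s ≤ j ∧ j < t ∧ (ExecAt N e j u ∨ Neutralized N e j u)

/-- roundEnd e k: the time at which the k-th round ends (the beginning of round k+1). -/
noncomputable def roundEnd (N : Network V) (e : ℕ → Config V) : ℕ → ℕ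
  | 0 => 0
  | k+1 => sInf {t : ℕ | CompletesRound N e (roundEnd N e k) t}

/-- b 0, b 1, …, b k is a branch: b 0 is the root r or an abnormal root,
and each b (i+1) is a child of b i; b i is at depth i+1. -/
def IsBranch (N : Network V) (γ : Config V) (k : ℕ) (b : Fin (k+1) → V) : Prop :=
  (b 0 = N.r ∨ abRoot N γ (b 0)) ∧ ∀ i : Fin k, childOf N γ (b i.castSucc) (b i.succ)

/-- Membership in the regular language (R_I + ε)(R_R + ε)R_C*(R_EB + ε)(R_EF + ε). -/
def InRSPLang (l : List RRule) : Prop :=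
  ∃ a b c d f : List RRule, l = a ++ b ++ c ++ d ++ f ∧
    (a = [] ∨ a = [RRule.RI]) ∧ (b = [] ∨ b = [RRule.RR]) ∧
    (∀ x ∈ c, x = RRule.RC) ∧ (d = [] ∨ d = [RRule.REB]) ∧ (f = [] ∨ f = [RRule.REF])

lemma walkWeight_nonneg (N : Network V) {u v : V} (p : N.G.Walk u v) :
    0 ≤ walkWeight N p := by
  induction p with
  | nil => simp [walkWeight]
  | cons h p ih =>
    simp only [walkWeight, SimpleGraph.Walk.darts_cons, List.map_cons, List.sum_cons]
    have := N.w_pos _ _ h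
    unfold walkWeight at ih
    linarith

lemma isWDist_unique (N : Network V) {u : V} {x y : ℝ}
    (hx : IsWDist N u x) (hy : IsWDist N u y) : x = y := by
  obtain ⟨⟨p, hp⟩, hxl⟩ := hx
  obtain ⟨⟨q, hq⟩, hyl⟩ := hy
  have := hxl q
  have := hyl p
  linarith

lemma isWDist_root (N : Network V) : IsWDist N N.r 0 := by
  constructor
  · exact ⟨SimpleGraph.Walk.nil, by simp [walkWeight]⟩
  · intro p; exact walkWeight_nonneg N p

/-- In every legitimate configuration, the parent pointers form a
shortest-path spanning tree of V_r rooted at r: every u ∈ V_r \ {r} points to a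
neighbor in V_r, the parent path from u reaches r, and its total weight is d(u,r). -/
theorem stmt4 (N : Network V) (γ : Config V) (hroot : RootConst N γ)
    (hleg : Legitimate N γ) :
    ∀ u : V, N.G.Reachable u N.r →
      (u ≠ N.r → N.G.Adj u (γ.par u) ∧ N.G.Reachable (γ.par u) N.r) ∧
      ∃ k : ℕ, (γ.par)^[k] u = N.r ∧
        (∀ j : ℕ, j < k → (γ.par)^[j] u ≠ N.r ∧ N.G.Adj ((γ.par)^[j] u) ((γ.par)^[j+1] u)) ∧
        IsWDist N u (∑ j ∈ Finset.range k, N.w ((γ.par)^[j] u) ((γ.par)^[j+1] u)) := by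
  -- Extract legit data for non-root reachable u
  have hdata : ∀ u : V, N.G.Reachable u N.r → u ≠ N.r →
      γ.st u = RStatus.C ∧ IsWDist N u (γ.d u) ∧ N.G.Adj u (γ.par u) ∧
        γ.d u = γ.d (γ.par u) + N.w u (γ.par u) := by
    intro u hreach hne
    rcases hleg u with h | h | h
    · exact absurd h hne
    · exact ⟨h.2.1, h.2.2.1, h.2.2.2.1, h.2.2.2.2⟩
    · exact absurd hreach h.1
  -- strict decrease of d along parent
  have hdec : ∀ u : V, N.G.Reachable u N.r → u ≠ N.r → γ.d (γ.par u) < γ.d u := by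
    intro u hr hne
    obtain ⟨_, _, hadj, heq⟩ := hdata u hr hne
    have := N.w_pos _ _ hadj
    linarith
  have key : ∀ n : ℕ, ∀ u : V,
      (Finset.univ.filter (fun v => γ.d v < γ.d u)).card ≤ n → N.G.Reachable u N.r →
      (u ≠ N.r → N.G.Adj u (γ.par u) ∧ N.G.Reachable (γ.par u) N.r) ∧
      ∃ k : ℕ, (γ.par)^[k] u = N.r ∧
        (∀ j : ℕ, j < k → (γ.par)^[j] u ≠ N.r ∧ N.G.Adj ((γ.par)^[j] u) ((γ.par)^[j+1] u)) ∧
        IsWDist N u (∑ j ∈ Finset.range k, N.w ((γ.par)^[j] u) ((γ.par)^[j+1] u)) := by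
    intro n
    induction n with
    | zero =>
      intro u hcard hreach
      by_cases hne : u = N.r
      · subst hne
        refine ⟨fun h => absurd rfl h, 0, rfl, by omega, ?_⟩
        simpa using isWDist_root N
      · exfalso
        have hmem : γ.par u ∈ Finset.univ.filter (fun v => γ.d v < γ.d u) := by
          simp [hdec u hreach hne]
        have := Finset.card_pos.mpr ⟨_, hmem⟩
        omega
    | succ n ih =>
      intro u hcard hreach
      by_cases hne : u = N.r
      · subst hne
        refine ⟨fun h => absurd rfl h, 0, rfl, by omega, ?_⟩
        simpa using isWDist_root N
      · obtain ⟨hst, hdist, hadj, heq⟩ := hdata u hreach hne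
        have hpreach : N.G.Reachable (γ.par u) N.r :=
          hadj.reachable.symm.trans hreach
        have hdlt := hdec u hreach hne
        have hsub : (Finset.univ.filter (fun v => γ.d v < γ.d (γ.par u))) ⊂
            (Finset.univ.filter (fun v => γ.d v < γ.d u)) := by
          constructor
          · intro v hv
            simp only [Finset.mem_filter] at *
            exact ⟨hv.1, lt_trans hv.2 hdlt⟩
          · intro hsup
            have := hsup (by simp [hdlt] : γ.par u ∈ _)
            simp only [Finset.mem_filter] at this
            exact absurd this.2 (lt_irrefl _)
        have hcard' : (Finset.univ.filter (fun v => γ.d v < γ.d (γ.par u))).card ≤ n := by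
          have := Finset.card_lt_card hsub
          omega
        obtain ⟨_, k, hk, hj, hw⟩ := ih (γ.par u) hcard' hpreach
        refine ⟨fun _ => ⟨hadj, hpreach⟩, k + 1, ?_, ?_, ?_⟩
        · rw [Function.iterate_succ_apply]; exact hk
        · intro j hjk
          cases j with
          | zero => simpa using ⟨hne, hadj⟩
          | succ i =>
            have hi := hj i (by omega)
            constructor
            · rw [Function.iterate_succ_apply]; exact hi.1
            · rw [Function.iterate_succ_apply, Function.iterate_succ_apply]
              exact hi.2
        · -- sum equals d u
          have hsum : (∑ j ∈ Finset.range (k+1),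
              N.w ((γ.par)^[j] u) ((γ.par)^[j+1] u)) =
              (∑ j ∈ Finset.range k,
                N.w ((γ.par)^[j] (γ.par u)) ((γ.par)^[j+1] (γ.par u))) + N.w u (γ.par u) := by
            rw [Finset.sum_range_succ']
            simp [Function.iterate_succ_apply]
          have hpdist : IsWDist N (γ.par u) (γ.d (γ.par u)) := by
            by_cases hp : γ.par u = N.r
            · rw [hp, hroot.2]
              exact isWDist_root N
            · exact (hdata (γ.par u) hpreach hp).2.1
          have hweq : (∑ j ∈ Finset.range k,
              N.w ((γ.par)^[j] (γ.par u)) ((γ.par)^[j+1] (γ.par u))) = γ.d (γ.par u) :=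
            isWDist_unique N hw hpdist
          rw [hsum, hweq, ← heq]
          exact hdist
  intro u hreach
  exact key _ u le_rfl hreach
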